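/- Suppose u : ℝ × ℂ → ℂ is of the form u(t,z) = e^{-iλt}(R_{αt}U)(z) with α ≠ 0 and U ∈ L²(ℂ) ∩ L^{2,s}, U ≠ 0, where s ≥ 0. Then ‖⟨z⟩^s u(t)‖_{L²(ℂ)} = ‖⟨z - αt⟩^s U‖_{L²(ℂ)}, and ‖⟨z⟩^s u(t)‖_{L²(ℂ)} / (|α|^s |t|^s) → ‖U‖_{L²(ℂ)} as t → ±∞. -/

import Mathlib

open MeasureTheory Complex Filter

noncomputable section

/-- Magnetic translation R_β. -/
def Rmag (β : ℂ) (u : ℂ → ℂ) (z : ℂ) : ℂ :=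
  u (z + β) * Complex.exp (((starRingEnd ℂ) z * β - z * (starRingEnd ℂ) β) / 2)

/-! Since `|R_β U (z)| = |U (z + β)|` and the phase has modulus one, the substitution
`z ↦ z - αt` gives the identity. For the limit, divide the weight by `|αt| ^ (2s)`:
`(1 + |z - c|²) / |c|² → 1` pointwise as `|c| → ∞` and is at most `3 (1 + |z|²)` once `|c| ≥ 1`,
so dominated convergence with majorant `3 ^ s ⟨z⟩ ^ (2s) |U|²` applies. -/

open Bornology Topology

section WeightedNorm

variable {E : Type*} [NormedAddCommGroup E]

lemma one_add_norm_sub_sq_div_le {c : E} (hc : 1 ≤ ‖c‖) (z : E) :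
    (1 + ‖z - c‖ ^ 2) / ‖c‖ ^ 2 ≤ 3 * (1 + ‖z‖ ^ 2) := by
  have hsub : ‖z - c‖ ≤ ‖z‖ + ‖c‖ := norm_sub_le z c
  rw [div_le_iff₀ (by positivity)]
  nlinarith [norm_nonneg (z - c), norm_nonneg z, sq_nonneg (‖z‖ - ‖c‖),
    mul_nonneg (sq_nonneg ‖z‖) (sub_nonneg.mpr (one_le_pow₀ (n := 2) hc))]

lemma tendsto_one_add_norm_sub_sq_div (z : E) :
    Tendsto (fun c : E => (1 + ‖z - c‖ ^ 2) / ‖c‖ ^ 2) (cobounded E) (𝓝 1) := by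
  have hnorm : Tendsto (fun c : E => ‖c‖) (cobounded E) atTop := tendsto_norm_cobounded_atTop
  have hinv : Tendsto (fun c : E => ‖c‖⁻¹) (cobounded E) (𝓝 0) := hnorm.inv_tendsto_atTop
  have hpos : ∀ᶠ c : E in cobounded E, 0 < ‖c‖ := hnorm.eventually_gt_atTop 0
  -- `|‖z - c‖ - ‖c‖| ≤ ‖z‖` squeezes `‖z - c‖ / ‖c‖` between `1 ∓ ‖z‖ / ‖c‖`.
  have hratio : Tendsto (fun c : E => ‖z - c‖ / ‖c‖) (cobounded E) (𝓝 1) := by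
    have hside : ∀ σ : ℝ, Tendsto (fun c : E => 1 + σ * ‖z‖ * ‖c‖⁻¹) (cobounded E) (𝓝 1) :=
      fun σ => by simpa using (hinv.const_mul (σ * ‖z‖)).const_add 1
    refine tendsto_of_tendsto_of_tendsto_of_le_of_le' (hside (-1)) (hside 1) ?_ ?_
    · filter_upwards [hpos] with c hc
      rw [le_div_iff₀ hc]
      have := norm_sub_norm_le c z
      rw [norm_sub_rev c z] at this
      field_simp
      linarith
    · filter_upwards [hpos] with c hc
      rw [div_le_iff₀ hc]
      have := norm_sub_le z c
      field_simp
      linarith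
  have hsum := (hinv.pow 2).add (hratio.pow 2)
  rw [zero_pow two_ne_zero, one_pow, zero_add] at hsum
  refine hsum.congr' ?_
  filter_upwards [hpos] with c hc
  field_simp

variable [MeasurableSpace E] [OpensMeasurableSpace E] {μ : Measure E} {s : ℝ} {g : E → ℝ}

lemma tendsto_integral_one_add_norm_sub_sq_div_rpow_mul (hs : 0 ≤ s)
    (hg : AEStronglyMeasurable g μ) (hgs : Integrable (fun z => (1 + ‖z‖ ^ 2) ^ s * g z) μ) :
    Tendsto (fun c : E => ∫ z, ((1 + ‖z - c‖ ^ 2) / ‖c‖ ^ 2) ^ s * g z ∂μ) (cobounded E)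
      (𝓝 (∫ z, g z ∂μ)) := by
  have : (cobounded E).IsCountablyGenerated := comap_norm_atTop (E := E) ▸ inferInstance
  refine tendsto_integral_filter_of_dominated_convergence
    (fun z => 3 ^ s * ‖(1 + ‖z‖ ^ 2) ^ s * g z‖) ?_ ?_ (hgs.norm.const_mul _) ?_
  · refine Eventually.of_forall fun c => AEStronglyMeasurable.mul ?_ hg
    exact Continuous.aestronglyMeasurable (by fun_prop (disch := exact Or.inr hs))
  · filter_upwards [tendsto_norm_cobounded_atTop.eventually_ge_atTop 1] with c hc
    refine Eventually.of_forall fun z => ?_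
    have hbound := Real.rpow_le_rpow (by positivity) (one_add_norm_sub_sq_div_le hc z) hs
    rw [Real.mul_rpow (by norm_num) (by positivity)] at hbound
    have hratio : 0 ≤ ((1 + ‖z - c‖ ^ 2) / ‖c‖ ^ 2) ^ s := by positivity
    have hweight : 0 ≤ (1 + ‖z‖ ^ 2) ^ s := by positivity
    rw [norm_mul, norm_mul, Real.norm_of_nonneg hratio, Real.norm_of_nonneg hweight, ← mul_assoc]
    gcongr
  · refine Eventually.of_forall fun z => ?_
    simpa using ((tendsto_one_add_norm_sub_sq_div z).rpow_const (Or.inr hs)).mul_const (g z)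

lemma tendsto_sqrt_integral_one_add_norm_sub_sq_rpow_mul_div (hs : 0 ≤ s)
    (hg : AEStronglyMeasurable g μ) (hgs : Integrable (fun z => (1 + ‖z‖ ^ 2) ^ s * g z) μ) :
    Tendsto (fun c : E => √(∫ z, (1 + ‖z - c‖ ^ 2) ^ s * g z ∂μ) / ‖c‖ ^ s) (cobounded E)
      (𝓝 √(∫ z, g z ∂μ)) := by
  refine ((Real.continuous_sqrt.tendsto _).comp
    (tendsto_integral_one_add_norm_sub_sq_div_rpow_mul hs hg hgs)).congr' ?_
  filter_upwards [tendsto_norm_cobounded_atTop.eventually_gt_atTop 0] with c hc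
  have hpow : (‖c‖ ^ 2) ^ s = (‖c‖ ^ s) ^ 2 := by
    rw [← Real.rpow_natCast, ← Real.rpow_natCast, ← Real.rpow_mul hc.le,
      ← Real.rpow_mul (by positivity), mul_comm]
  have hrw (z : E) : ((1 + ‖z - c‖ ^ 2) / ‖c‖ ^ 2) ^ s * g z
      = (1 + ‖z - c‖ ^ 2) ^ s * g z / (‖c‖ ^ s) ^ 2 := by
    rw [Real.div_rpow (by positivity) (by positivity), hpow, div_mul_eq_mul_div]
  simp only [Function.comp_apply, hrw, integral_div, Real.sqrt_div' _ (sq_nonneg _),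
    Real.sqrt_sq (Real.rpow_nonneg hc.le s)]

end WeightedNorm

lemma norm_Rmag (β : ℂ) (U : ℂ → ℂ) (z : ℂ) : ‖Rmag β U z‖ = ‖U (z + β)‖ := by
  have h : (((starRingEnd ℂ) z * β - z * (starRingEnd ℂ) β) / 2).re = 0 := by
    simp [Complex.sub_re, Complex.mul_re]
  simp [Rmag, Complex.norm_exp, h]

lemma integral_mul_norm_Rmag_sq (w : ℂ → ℝ) (β : ℂ) (U : ℂ → ℂ) :
    ∫ z, w z * ‖Rmag β U z‖ ^ 2 = ∫ z, w (z - β) * ‖U z‖ ^ 2 := by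
  simpa [norm_Rmag] using integral_add_right_eq_self (fun z => w (z - β) * ‖U z‖ ^ 2) β

theorem stmt12_general (s : ℝ) (hs : 0 ≤ s) (α : ℂ) (hα : α ≠ 0) (lam : ℝ)
    (U : ℂ → ℂ) (hU2 : MemLp U 2 volume)
    (hUs : Integrable (fun z : ℂ => (1 + ‖z‖ ^ 2) ^ s * ‖U z‖ ^ 2))
    (u : ℝ → ℂ → ℂ)
    (hu : ∀ t z, u t z = Complex.exp (-Complex.I * lam * t) * Rmag (α * t) U z) :
    (∀ t : ℝ, Real.sqrt (∫ z : ℂ, (1 + ‖z‖ ^ 2) ^ s * ‖u t z‖ ^ 2)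
        = Real.sqrt (∫ z : ℂ, (1 + ‖z - α * t‖ ^ 2) ^ s * ‖U z‖ ^ 2))
    ∧ Tendsto (fun t : ℝ =>
        Real.sqrt (∫ z : ℂ, (1 + ‖z‖ ^ 2) ^ s * ‖u t z‖ ^ 2) / (‖α‖ ^ s * |t| ^ s))
        atTop (nhds (Real.sqrt (∫ z : ℂ, ‖U z‖ ^ 2)))
    ∧ Tendsto (fun t : ℝ =>
        Real.sqrt (∫ z : ℂ, (1 + ‖z‖ ^ 2) ^ s * ‖u t z‖ ^ 2) / (‖α‖ ^ s * |t| ^ s))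
        atBot (nhds (Real.sqrt (∫ z : ℂ, ‖U z‖ ^ 2))) := by
  have hnorm_u (t : ℝ) (z : ℂ) : ‖u t z‖ = ‖Rmag (α * t) U z‖ := by
    rw [hu, norm_mul, show -I * lam * t = ((-(lam * t) : ℝ) : ℂ) * I by push_cast; ring,
      norm_exp_ofReal_mul_I, one_mul]
  have hshift (t : ℝ) : ∫ z : ℂ, (1 + ‖z‖ ^ 2) ^ s * ‖u t z‖ ^ 2
      = ∫ z : ℂ, (1 + ‖z - α * t‖ ^ 2) ^ s * ‖U z‖ ^ 2 := by
    simp_rw [hnorm_u]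
    exact integral_mul_norm_Rmag_sq (fun z => (1 + ‖z‖ ^ 2) ^ s) _ U
  have hscale (t : ℝ) : ‖α * t‖ ^ s = ‖α‖ ^ s * |t| ^ s := by
    rw [norm_mul, norm_real, Real.norm_eq_abs, Real.mul_rpow (norm_nonneg α) (abs_nonneg t)]
  have hlim := tendsto_sqrt_integral_one_add_norm_sub_sq_rpow_mul_div (g := fun z => ‖U z‖ ^ 2) hs
    (hU2.aestronglyMeasurable.norm.pow 2) hUs
  have htravel {l : Filter ℝ} (hl : Tendsto ((↑) : ℝ → ℂ) l (cobounded ℂ)) :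
      Tendsto (fun t : ℝ =>
        √(∫ z : ℂ, (1 + ‖z‖ ^ 2) ^ s * ‖u t z‖ ^ 2) / (‖α‖ ^ s * |t| ^ s))
        l (𝓝 √(∫ z : ℂ, ‖U z‖ ^ 2)) :=
    (hlim.comp ((tendsto_mul_left_cobounded hα).comp hl)).congr fun t => by
      simp only [Function.comp_apply, hshift, hscale]
  exact ⟨fun t => by rw [hshift], htravel (RCLike.tendsto_ofReal_atTop_cobounded ℂ),
    htravel (RCLike.tendsto_ofReal_atBot_cobounded ℂ)⟩

/-- Traveling waves have growing weighted norms: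
‖⟨z⟩ˢ u(t)‖_{L²} = ‖⟨z-αt⟩ˢ U‖_{L²} and ‖⟨z⟩ˢ u(t)‖_{L²}/(|α|ˢ|t|ˢ) → ‖U‖_{L²} as t → ±∞. -/
theorem stmt12 (s : ℝ) (hs : 0 ≤ s) (α : ℂ) (hα : α ≠ 0) (lam : ℝ)
    (U : ℂ → ℂ) (hU2 : MemLp U 2 volume)
    (hUs : Integrable (fun z : ℂ => (1 + ‖z‖ ^ 2) ^ s * ‖U z‖ ^ 2))
    (hUne : U ≠ 0)
    (u : ℝ → ℂ → ℂ)
    (hu : ∀ t z, u t z = Complex.exp (-Complex.I * lam * t) * Rmag (α * t) U z) :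
    (∀ t : ℝ, Real.sqrt (∫ z : ℂ, (1 + ‖z‖ ^ 2) ^ s * ‖u t z‖ ^ 2)
        = Real.sqrt (∫ z : ℂ, (1 + ‖z - α * t‖ ^ 2) ^ s * ‖U z‖ ^ 2))
    ∧ Tendsto (fun t : ℝ =>
        Real.sqrt (∫ z : ℂ, (1 + ‖z‖ ^ 2) ^ s * ‖u t z‖ ^ 2) / (‖α‖ ^ s * |t| ^ s))
        atTop (nhds (Real.sqrt (∫ z : ℂ, ‖U z‖ ^ 2)))
    ∧ Tendsto (fun t : ℝ =>
        Real.sqrt (∫ z : ℂ, (1 + ‖z‖ ^ 2) ^ s * ‖u t z‖ ^ 2) / (‖α‖ ^ s * |t| ^ s))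
        atBot (nhds (Real.sqrt (∫ z : ℂ, ‖U z‖ ^ 2))) :=
  stmt12_general s hs α hα lam U hU2 hUs u hu
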